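/- Fix α > 0 and n > 0 with α + n > 2. Then F_{α,n}((α + n − 2)/2) < 0, where F_{α,n}(z) = Σ_{k=0}^∞ (2k − n)·A_k·z^k. -/

import Mathlib

/-!
With `a = n/2` and `b = α/2` the coefficients obey `2(k+1)(k+b) A_{k+1} = (k+a) A_k`, so
`f(x) = Σ A_k x^k` is Kummer's function `M(a, b, x/2)` and `F = 2ψ` with
`ψ(x) = Σ (k-a) A_k x^k = x f'(x) - a f(x)`. Kummer's equation becomes
`ψ + 2ψ' = 2(x - z) f'` with `z = a + b - 1 = (α + n - 2)/2`. As `f' ≥ 0` on `[0, ∞)`,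
the function `e^{x/2} ψ(x)` decreases on `[0, z]`, so `e^{z/2} ψ(z) ≤ ψ(0) = -a A_0 < 0`.
-/

open Real Set Filter

open scoped Nat

section PowerSeries

variable {c : ℕ → ℝ}

lemma nat_mul_pow_pred_le_add_one_pow {R : ℝ} (hR : 0 ≤ R) :
    ∀ k : ℕ, k * R ^ (k - 1) ≤ (R + 1) ^ k
  | 0 => by simp
  | k + 1 => by
    have ih := nat_mul_pow_pred_le_add_one_pow hR k
    have hpow : R ^ k ≤ (R + 1) ^ k := pow_le_pow_left₀ hR (by linarith) k
    have hshift : (k : ℝ) * R ^ (k - 1) * R = k * R ^ k := by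
      cases k <;> simp [pow_succ, mul_assoc]
    calc ((k + 1 : ℕ) : ℝ) * R ^ (k + 1 - 1) = k * R ^ (k - 1) * R + R ^ k := by
          rw [hshift]; push_cast; ring
      _ ≤ (R + 1) ^ k * R + (R + 1) ^ k := by gcongr
      _ = (R + 1) ^ (k + 1) := by ring

lemma summable_abs_mul_nat_mul_pow_pred (hc : ∀ x, Summable fun k => c k * x ^ k) {R : ℝ}
    (hR : 0 ≤ R) : Summable fun k => |c k| * (k * R ^ (k - 1)) :=
  (hc (R + 1)).abs.of_nonneg_of_le (fun k => by positivity) fun k => by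
    rw [abs_mul, abs_of_nonneg (by positivity : (0 : ℝ) ≤ (R + 1) ^ k)]
    exact mul_le_mul_of_nonneg_left (nat_mul_pow_pred_le_add_one_pow hR k) (abs_nonneg _)

lemma summable_succ_mul_mul_pow (hc : ∀ x, Summable fun k => c k * x ^ k) (x : ℝ) :
    Summable fun k => (k + 1) * c (k + 1) * x ^ k := by
  have hbound := summable_abs_mul_nat_mul_pow_pred hc (abs_nonneg x)
  refine .of_norm_bounded ((summable_nat_add_iff 1).mpr hbound) fun k => ?_
  rw [Real.norm_eq_abs, abs_mul, abs_mul, abs_pow, Nat.add_sub_cancel,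
    abs_of_nonneg (by positivity : (0 : ℝ) ≤ k + 1)]
  exact le_of_eq (by push_cast; ring)

lemma summable_nat_mul_mul_pow (hc : ∀ x, Summable fun k => c k * x ^ k) (x : ℝ) :
    Summable fun k => k * c k * x ^ k := by
  refine (summable_nat_add_iff 1).mp <|
    ((summable_succ_mul_mul_pow hc x).mul_right x).congr fun k => ?_
  push_cast
  ring

lemma hasDerivAt_tsum_mul_pow (hc : ∀ x, Summable fun k => c k * x ^ k) (x : ℝ) :
    HasDerivAt (fun y => ∑' k, c k * y ^ k) (∑' k, (k + 1) * c (k + 1) * x ^ k) x := by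
  set R := |x| + 1 with hR
  have hR₀ : 0 < R := by positivity
  have hxR : x ∈ Ioo (-R) R := ⟨by linarith [neg_abs_le x], by linarith [le_abs_self x]⟩
  have hbound :
      ∀ k, ∀ y ∈ Ioo (-R) R, ‖c k * (k * y ^ (k - 1))‖ ≤ |c k| * (k * R ^ (k - 1)) := by
    intro k y hy
    rw [Real.norm_eq_abs, abs_mul, abs_mul, abs_pow, Nat.abs_cast]
    gcongr
    exact abs_le.mpr ⟨hy.1.le, hy.2.le⟩
  have hderiv := hasDerivAt_tsum_of_isPreconnected (g := fun k y => c k * y ^ k)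
    (summable_abs_mul_nat_mul_pow_pred hc hR₀.le) isOpen_Ioo isPreconnected_Ioo
    (fun k y _ => (hasDerivAt_pow k y).const_mul (c k)) hbound
    ⟨neg_lt_zero.mpr hR₀, hR₀⟩ (hc 0) hxR
  have hsum : Summable fun k => c k * (k * x ^ (k - 1)) :=
    .of_norm_bounded (summable_abs_mul_nat_mul_pow_pred hc hR₀.le) fun k => hbound k x hxR
  rw [hsum.tsum_eq_zero_add] at hderiv
  refine hderiv.congr_deriv ?_
  simp only [Nat.cast_zero, zero_mul, mul_zero, zero_add, Nat.cast_succ, Nat.add_sub_cancel]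
  exact tsum_congr fun k => by ring

lemma summable_sub_mul_mul_pow (hc : ∀ x, Summable fun k => c k * x ^ k) (a x : ℝ) :
    Summable fun k => (k - a) * c k * x ^ k :=
  ((summable_nat_mul_mul_pow hc x).sub ((hc x).mul_left a)).congr fun k => by ring

end PowerSeries

section Recurrence

variable {a b : ℝ} {A : ℕ → ℝ}

lemma summable_mul_pow_of_recurrence (hb : 0 ≤ b)
    (hrec : ∀ k : ℕ, 2 * (k + 1) * (k + b) * A (k + 1) = (k + a) * A k) (x : ℝ) :
    Summable fun k => A k * x ^ k := by
  refine summable_of_ratio_norm_eventually_le (r := 1 / 2) (by norm_num) ?_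
  obtain ⟨K, hK⟩ := exists_nat_ge (max (|a| + 1) (2 * |x|))
  filter_upwards [eventually_ge_atTop K] with k hk
  have hkK : (K : ℝ) ≤ k := by exact_mod_cast hk
  have hka : |a| + 1 ≤ k := by linarith [le_max_left (|a| + 1) (2 * |x|)]
  have hkx : 2 * |x| ≤ k := by linarith [le_max_right (|a| + 1) (2 * |x|)]
  have hD : 0 < 2 * ((k : ℝ) + 1) * (k + b) := by nlinarith [abs_nonneg a]
  have hrec_abs : 2 * ((k : ℝ) + 1) * (k + b) * |A (k + 1)| = |k + a| * |A k| := by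
    rw [← abs_of_pos hD, ← abs_mul, hrec k, abs_mul]
  have hgrowth : |(k : ℝ) + a| * |x| ≤ (k + 1) * (k + b) := by
    have : |(k : ℝ) + a| ≤ 2 * k :=
      abs_le.mpr ⟨by linarith [neg_abs_le a], by linarith [le_abs_self a]⟩
    nlinarith [abs_nonneg x, abs_nonneg ((k : ℝ) + a)]
  rw [Real.norm_eq_abs, Real.norm_eq_abs, abs_mul, abs_mul, abs_pow, abs_pow]
  refine le_of_mul_le_mul_left ?_ hD
  calc 2 * ((k : ℝ) + 1) * (k + b) * (|A (k + 1)| * |x| ^ (k + 1))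
      = |(k : ℝ) + a| * |x| * (|A k| * |x| ^ k) := by
        rw [pow_succ]; linear_combination |x| * |x| ^ k * hrec_abs
    _ ≤ (k + 1) * (k + b) * (|A k| * |x| ^ k) := by gcongr
    _ = 2 * ((k : ℝ) + 1) * (k + b) * (1 / 2 * (|A k| * |x| ^ k)) := by ring

lemma tsum_sub_mul_add_two_mul_tsum_deriv
    (hrec : ∀ k : ℕ, 2 * (k + 1) * (k + b) * A (k + 1) = (k + a) * A k)
    (hA : ∀ x, Summable fun k => A k * x ^ k) (x : ℝ) :
    ∑' k : ℕ, (k - a) * A k * x ^ k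
        + 2 * ∑' k : ℕ, (k + 1) * (k + 1 - a) * A (k + 1) * x ^ k =
      2 * (x - (a + b - 1)) * ∑' k : ℕ, (k + 1) * A (k + 1) * x ^ k := by
  have hψ := (summable_sub_mul_mul_pow hA a x).hasSum
  have hψ' := ((summable_succ_mul_mul_pow (summable_sub_mul_mul_pow hA a) x).congr
    fun k : ℕ => show _ = (k + 1) * (k + 1 - a) * A (k + 1) * x ^ k by push_cast; ring).hasSum
  have hW := (summable_succ_mul_mul_pow hA x).hasSum
  have hV :
      HasSum (fun k : ℕ => k * A k * x ^ k) (x * ∑' k : ℕ, (k + 1) * A (k + 1) * x ^ k) := by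
    refine (hasSum_nat_add_iff' 1).mp ?_
    simp only [Finset.sum_range_one, Nat.cast_zero, zero_mul, sub_zero]
    exact (hW.mul_left x).congr_fun fun k => by push_cast; ring
  have hlhs := (hψ.add (hψ'.mul_left 2)).congr_fun fun k =>
    show 2 * (k * A k * x ^ k) - 2 * (a + b - 1) * ((k + 1) * A (k + 1) * x ^ k) = _ by
      linear_combination -x ^ k * hrec k
  rw [hlhs.unique ((hV.mul_left 2).sub (hW.mul_left (2 * (a + b - 1))))]
  ring

lemma hasDerivAt_exp_half_mul_tsum (hb : 0 ≤ b)
    (hrec : ∀ k : ℕ, 2 * (k + 1) * (k + b) * A (k + 1) = (k + a) * A k) (x : ℝ) :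
    HasDerivAt (fun y => exp (y / 2) * ∑' k : ℕ, (k - a) * A k * y ^ k)
      (exp (x / 2) * (x - (a + b - 1)) * ∑' k : ℕ, (k + 1) * A (k + 1) * x ^ k) x := by
  have hA := summable_mul_pow_of_recurrence hb hrec
  have hψ := hasDerivAt_tsum_mul_pow (summable_sub_mul_mul_pow hA a) x
  have hexp : HasDerivAt (fun y => exp (y / 2)) (exp (x / 2) * (1 / 2)) x :=
    ((hasDerivAt_id x).div_const 2).exp
  refine (hexp.mul hψ).congr_deriv ?_
  have hψ' : ∑' k : ℕ, (k + 1) * ((↑(k + 1) - a) * A (k + 1)) * x ^ k =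
      ∑' k : ℕ, (k + 1) * (k + 1 - a) * A (k + 1) * x ^ k :=
    tsum_congr fun k => by push_cast; ring
  rw [hψ']
  linear_combination exp (x / 2) / 2 * tsum_sub_mul_add_two_mul_tsum_deriv hrec hA x

theorem tsum_sub_mul_mul_pow_lt_zero (ha : 0 < a) (hb : 0 ≤ b) (hab : 1 ≤ a + b)
    (hpos : ∀ k, 0 < A k)
    (hrec : ∀ k : ℕ, 2 * (k + 1) * (k + b) * A (k + 1) = (k + a) * A k) :
    ∑' k : ℕ, (k - a) * A k * (a + b - 1) ^ k < 0 := by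
  have hz : 0 ≤ a + b - 1 := by linarith
  have hφ := hasDerivAt_exp_half_mul_tsum hb hrec
  have hanti : AntitoneOn (fun y => exp (y / 2) * ∑' k : ℕ, (k - a) * A k * y ^ k)
      (Icc 0 (a + b - 1)) := by
    refine antitoneOn_of_hasDerivWithinAt_nonpos (convex_Icc _ _)
      (fun y _ => (hφ y).continuousAt.continuousWithinAt) (fun y _ => (hφ y).hasDerivWithinAt) ?_
    intro y hy
    rw [interior_Icc] at hy
    have hW : 0 ≤ ∑' k : ℕ, (k + 1) * A (k + 1) * y ^ k :=
      tsum_nonneg fun k => by have := hpos (k + 1); have := hy.1.le; positivity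
    exact mul_nonpos_of_nonpos_of_nonneg
      (mul_nonpos_of_nonneg_of_nonpos (exp_pos _).le (by linarith [hy.2])) hW
  have hψ₀ : ∑' k : ℕ, (k - a) * A k * (0 : ℝ) ^ k = -a * A 0 := by
    rw [tsum_eq_single 0 fun k hk => by simp [hk]]
    simp
  have hφz := hanti ⟨le_rfl, hz⟩ ⟨hz, le_rfl⟩ hz
  simp only [hψ₀, zero_div, exp_zero, one_mul] at hφz
  exact neg_of_mul_neg_right (hφz.trans_lt (by nlinarith [hpos 0])) (exp_pos _).le

end Recurrence

/-- `(a)_k / ((b)_k k! 2^k)`, the coefficient of `x^k` in Kummer's function `M(a, b, x/2)`. -/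
noncomputable def kummerCoeff (a b : ℝ) (k : ℕ) : ℝ :=
  Gamma b / Gamma a * (Gamma (k + a) / (Gamma (k + b) * 2 ^ k * k !))

lemma kummerCoeff_pos {a b : ℝ} (ha : 0 < a) (hb : 0 < b) (k : ℕ) : 0 < kummerCoeff a b k := by
  have := Gamma_pos_of_pos ha
  have := Gamma_pos_of_pos hb
  have := Gamma_pos_of_pos (by positivity : (0 : ℝ) < k + a)
  have := Gamma_pos_of_pos (by positivity : (0 : ℝ) < k + b)
  unfold kummerCoeff
  positivity

lemma kummerCoeff_succ {a b : ℝ} (ha : 0 < a) (hb : 0 < b) (k : ℕ) :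
    2 * (k + 1) * (k + b) * kummerCoeff a b (k + 1) = (k + a) * kummerCoeff a b k := by
  have hka : (k : ℝ) + a ≠ 0 := by positivity
  have hkb : (k : ℝ) + b ≠ 0 := by positivity
  have := (Gamma_pos_of_pos ha).ne'
  have := (Gamma_pos_of_pos (by positivity : (0 : ℝ) < k + b)).ne'
  unfold kummerCoeff
  rw [Nat.factorial_succ, pow_succ, Nat.cast_mul, Nat.cast_succ, add_right_comm _ 1 a,
    add_right_comm _ 1 b, Gamma_add_one hka, Gamma_add_one hkb]
  field_simp

/-- For `α > 0`, `n > 0` with `α + n > 2`, one has `F((α + n − 2)/2) < 0`, where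
`F(z) = Σ (2k − n)·A_k·z^k`. -/
theorem stmt_14 (α n : ℝ) (hα : 0 < α) (hn : 0 < n) (hαn : 2 < α + n) (A : ℕ → ℝ)
    (hA : ∀ k : ℕ,
      A k = Real.Gamma (α / 2) / Real.Gamma (n / 2) *
        (Real.Gamma ((k : ℝ) + n / 2) /
          (Real.Gamma ((k : ℝ) + α / 2) * 2 ^ k * (Nat.factorial k : ℝ))))
    (F : ℝ → ℝ) (hF : ∀ z : ℝ, F z = ∑' k : ℕ, (2 * (k : ℝ) - n) * A k * z ^ k) :
    F ((α + n - 2) / 2) < 0 := by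
  obtain rfl : A = kummerCoeff (n / 2) (α / 2) := funext hA
  have hψ := tsum_sub_mul_mul_pow_lt_zero (by positivity) (by positivity) (by linarith)
    (kummerCoeff_pos (a := n / 2) (b := α / 2) (by positivity) (by positivity))
    (kummerCoeff_succ (by positivity) (by positivity))
  rw [hF, show (α + n - 2) / 2 = n / 2 + α / 2 - 1 by ring]
  set z := n / 2 + α / 2 - 1
  calc ∑' k : ℕ, (2 * (k : ℝ) - n) * kummerCoeff (n / 2) (α / 2) k * z ^ k
      = 2 * ∑' k : ℕ, (k - n / 2) * kummerCoeff (n / 2) (α / 2) k * z ^ k := by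
        rw [← tsum_mul_left]; exact tsum_congr fun k => by ring
    _ < 0 := by linarith
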